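/- Suppose the Shearer criterion is satisfied with ε-slack and V ⊆ 𝓑 is a dependency-clique. Then for any ρ with 0 ≤ ρ < ε, the sum over B in V of the adjusted weights a_ρ(τ) = w(τ)(1+ρ)^{|τ|} over all single-sink witness DAGs τ with sink labeled B is at most (1+ρ)/(ε−ρ). -/

import Mathlib

/-!
Write `Z_p(A)` for the alternating independence polynomial of the dependency graph restricted
to `A`, so that `Q(I, p) = p^I Z_p(𝓑 \ N̄(I))` and
`Z(A \ W) = ∑_{J ⊆ W independent} p^J Z(A \ N̄(J))`. Under the Shearer criterion every `Z_p(A)`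
is at least `Z_p(𝓑) > 0`, and the criterion survives lowering the coordinates of `p`.

Grouping the nodes of a single-sink witness DAG by depth gives a sequence of nonempty independent
layers, each inside the closed neighbourhood of the previous one; it determines the DAG up to
isomorphism and carries its weight. Summing the weights of all such sequences telescopes through
the identity above, so the DAGs with sink `b` have total adjusted weight at most
`p_b Z_p(𝓑 \ N̄(b)) / Z_p(𝓑)` with `p = (1+ρ)P`. Since `V` is a clique, `Z` is affine in the
coordinates indexed by `V`; raising them from `(1+ρ)P` to `(1+ε)P` stays below `(1+ε)P`, hence
keeps `Z(𝓑) ≥ 0`, and this bounds the sum over `V` by `(1+ρ)/(ε-ρ) · Z_p(𝓑)`.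
-/

open scoped BigOperators ENNReal Classical

namespace LLL

/-- Two bad events are dependent iff their variable sets intersect. -/
def Dep {n : ℕ} {E : Type} (S : E → Finset (Fin n)) (b b' : E) : Prop :=
  (S b ∩ S b').Nonempty

/-- A witness DAG: a finite DAG with nodes labeled by bad events, where any two
nodes with dependent labels are joined by an edge (in one direction), and nodes
with non-dependent labels have no edge. -/
structure WDag (n : ℕ) (E : Type) (S : E → Finset (Fin n)) where
  size : ℕ
  label : Fin size → E
  edge : Fin size → Fin size → Prop
  acyclic : ∀ v, ¬ Relation.TransGen edge v v
  edge_dep : ∀ v w, edge v w → Dep S (label v) (label w)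
  dep_edge : ∀ v w, v ≠ w → Dep S (label v) (label w) → edge v w ∨ edge w v

namespace WDag

variable {n : ℕ} {E : Type} {S : E → Finset (Fin n)}

/-- Isomorphism of witness DAGs. -/
def Iso (G G' : WDag n E S) : Prop :=
  ∃ e : Fin G.size ≃ Fin G'.size,
    (∀ v, G'.label (e v) = G.label v) ∧ ∀ v w, G'.edge (e v) (e w) ↔ G.edge v w

theorem Iso.refl (G : WDag n E S) : Iso G G :=
  ⟨Equiv.refl _, fun _ => rfl, fun _ _ => Iff.rfl⟩

theorem Iso.symm {G G' : WDag n E S} (h : Iso G G') : Iso G' G := by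
  obtain ⟨e, hl, he⟩ := h
  refine ⟨e.symm, fun v => ?_, fun v w => ?_⟩
  · simpa using (hl (e.symm v)).symm
  · simpa using (he (e.symm v) (e.symm w)).symm

theorem Iso.trans {G₁ G₂ G₃ : WDag n E S} (h12 : Iso G₁ G₂) (h23 : Iso G₂ G₃) :
    Iso G₁ G₃ := by
  obtain ⟨e, hl, he⟩ := h12
  obtain ⟨f, hl', he'⟩ := h23
  refine ⟨e.trans f, fun v => ?_, fun v w => ?_⟩
  · rw [Equiv.trans_apply, hl' (e v), hl v]
  · rw [Equiv.trans_apply, Equiv.trans_apply, he' (e v) (e w), he v w]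

instance wdSetoid (n : ℕ) (E : Type) (S : E → Finset (Fin n)) : Setoid (WDag n E S) :=
  ⟨Iso, ⟨Iso.refl, Iso.symm, Iso.trans⟩⟩

/-- Isomorphism classes of witness DAGs. -/
def WClass (n : ℕ) (E : Type) (S : E → Finset (Fin n)) : Type :=
  Quotient (wdSetoid n E S)

/-- The weight of a witness DAG: the product of the probabilities of its labels. -/
noncomputable def wt (P : E → ℝ) (G : WDag n E S) : ℝ := ∏ v, P (G.label v)

theorem wt_invariant (P : E → ℝ) {G G' : WDag n E S} (h : Iso G G') :
    wt P G = wt P G' := by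
  obtain ⟨e, hl, _⟩ := h
  exact Fintype.prod_equiv e (fun v => P (G.label v)) (fun v => P (G'.label v))
    (fun v => by show P (G.label v) = P (G'.label (e v)); rw [hl v])

/-- The weight, as a function on isomorphism classes. -/
noncomputable def cwt (P : E → ℝ) : WClass n E S → ℝ :=
  Quotient.lift (wt P) fun _ _ h => wt_invariant P h

theorem size_invariant {G G' : WDag n E S} (h : Iso G G') : G.size = G'.size := by
  obtain ⟨e, -, -⟩ := h
  simpa using Fintype.card_congr e

/-- The adjusted weight `a_ρ(G) = w(G) (1+ρ)^{|G|}`. -/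
noncomputable def awt (P : E → ℝ) (ρ : ℝ) (G : WDag n E S) : ℝ :=
  wt P G * (1 + ρ) ^ G.size

theorem awt_invariant (P : E → ℝ) (ρ : ℝ) {G G' : WDag n E S} (h : Iso G G') :
    awt P ρ G = awt P ρ G' := by
  unfold awt
  rw [wt_invariant P h, size_invariant h]

/-- The adjusted weight, as a function on isomorphism classes. -/
noncomputable def cawt (P : E → ℝ) (ρ : ℝ) : WClass n E S → ℝ :=
  Quotient.lift (awt P ρ) fun _ _ h => awt_invariant P ρ h

/-- A node is a sink if it has no outgoing edge. -/
def IsSink (G : WDag n E S) (v : Fin G.size) : Prop := ∀ w, ¬ G.edge v w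

/-- A witness DAG has a single sink. -/
def SingleSink (G : WDag n E S) : Prop := ∃! v, IsSink G v

/-- A witness DAG has a single sink, labeled by `b`. -/
def SinkLabeled (G : WDag n E S) (b : E) : Prop :=
  ∃ v, IsSink G v ∧ G.label v = b ∧ ∀ w, IsSink G w → w = v

end WDag

/-- A set of bad events is independent if no two distinct members are dependent. -/
def Indep {n : ℕ} {E : Type} (S : E → Finset (Fin n)) (I : Finset E) : Prop :=
  ∀ b ∈ I, ∀ b' ∈ I, b ≠ b' → ¬ Dep S b b'

/-- The independent-set polynomial `Q(I,p)`. -/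
noncomputable def Q {n : ℕ} {E : Type} [Fintype E] (S : E → Finset (Fin n))
    (p : E → ℝ) (I : Finset E) : ℝ :=
  ∑ J ∈ Finset.univ.filter (fun J : Finset E => I ⊆ J ∧ Indep S J),
    (-1 : ℝ) ^ (J.card - I.card) * ∏ b ∈ J, p b

/-- The Shearer criterion for the probability vector `p`. -/
def Shearer {n : ℕ} {E : Type} [Fintype E] (S : E → Finset (Fin n)) (p : E → ℝ) : Prop :=
  0 < Q S p ∅ ∧ ∀ I : Finset E, Indep S I → 0 ≤ Q S p I

theorem sum_powerset_neg_one_pow_sub_card {α : Type*} {M J : Finset α} (hMJ : M ⊆ J) :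
    ∑ K ∈ M.powerset, (-1 : ℝ) ^ (J.card - K.card) = if M = ∅ then (-1) ^ J.card else 0 := by
  have hsplit : ∀ K ∈ M.powerset,
      (-1 : ℝ) ^ (J.card - K.card) = (-1) ^ J.card * (-1) ^ K.card := by
    intro K hK
    obtain ⟨m, hm⟩ := Nat.exists_eq_add_of_le
      (Finset.card_le_card ((Finset.mem_powerset.1 hK).trans hMJ))
    rw [hm, Nat.add_sub_cancel_left, pow_add, mul_right_comm, ← pow_add,
      Even.neg_one_pow ⟨_, rfl⟩, one_mul]
  have hsum : ∑ K ∈ M.powerset, (-1 : ℝ) ^ K.card = if M = ∅ then 1 else 0 := by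
    exact_mod_cast Finset.sum_powerset_neg_one_pow_card (x := M)
  rw [Finset.sum_congr rfl hsplit, ← Finset.mul_sum, hsum]
  split_ifs <;> simp

section Independence

variable {n : ℕ} {E : Type} {S : E → Finset (Fin n)}

theorem Dep.symm {b b' : E} (h : Dep S b b') : Dep S b' b := by
  rwa [Dep, Finset.inter_comm]

theorem Indep.subset {I J : Finset E} (hJ : Indep S J) (h : I ⊆ J) : Indep S I :=
  fun b hb b' hb' => hJ b (h hb) b' (h hb')

theorem indep_empty : Indep S (∅ : Finset E) := by
  simp [Indep]

theorem indep_singleton (b : E) : Indep S {b} := by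
  simp [Indep]

theorem indep_subset_clique {V J : Finset E} (hV : ∀ b ∈ V, ∀ b' ∈ V, b ≠ b' → Dep S b b')
    (hJV : J ⊆ V) (hJ : Indep S J) : J = ∅ ∨ ∃ b ∈ V, J = {b} := by
  obtain rfl | ⟨b, hb⟩ := J.eq_empty_or_nonempty
  · exact Or.inl rfl
  refine Or.inr ⟨b, hJV hb, Finset.eq_singleton_iff_unique_mem.2 ⟨hb, fun b' hb' => ?_⟩⟩
  by_contra hne
  exact hJ b' hb' b hb hne (hV b' (hJV hb') b (hJV hb) hne)

variable (S) in
/-- The alternating independence polynomial `Z_p(A)` of the dependency graph induced on `A`. -/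
noncomputable def indepPoly (p : E → ℝ) (A : Finset E) : ℝ :=
  ∑ J ∈ A.powerset.filter (Indep S), (-1) ^ J.card * ∏ b ∈ J, p b

theorem indepPoly_congr {p q : E → ℝ} {A : Finset E} (h : ∀ b ∈ A, p b = q b) :
    indepPoly S p A = indepPoly S q A := by
  refine Finset.sum_congr rfl fun J hJ => ?_
  have hJA := Finset.mem_powerset.1 (Finset.mem_filter.1 hJ).1
  rw [Finset.prod_congr rfl fun b hb => h b (hJA hb)]

end Independence

section IndepPoly

variable {n : ℕ} {E : Type} [Fintype E] {S : E → Finset (Fin n)}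

variable (S) in
noncomputable def closedNbhd (J : Finset E) : Finset E :=
  Finset.univ.filter fun b => b ∈ J ∨ ∃ j ∈ J, Dep S b j

@[simp]
theorem mem_closedNbhd {J : Finset E} {b : E} :
    b ∈ closedNbhd S J ↔ b ∈ J ∨ ∃ j ∈ J, Dep S b j := by
  simp [closedNbhd]

@[simp]
theorem closedNbhd_empty : closedNbhd S (∅ : Finset E) = ∅ := by
  ext; simp

theorem self_mem_closedNbhd (b : E) : b ∈ closedNbhd S {b} := by
  simp

theorem Indep.union {I K : Finset E} (hI : Indep S I) (hK : Indep S K)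
    (hIK : ∀ x ∈ K, x ∉ closedNbhd S I) : Indep S (I ∪ K) := by
  intro b hb b' hb' hne hdep
  rw [Finset.mem_union] at hb hb'
  rcases hb with hb | hb <;> rcases hb' with hb' | hb'
  · exact hI b hb b' hb' hne hdep
  · exact hIK b' hb' (mem_closedNbhd.2 (Or.inr ⟨b, hb, hdep.symm⟩))
  · exact hIK b hb (mem_closedNbhd.2 (Or.inr ⟨b', hb', hdep⟩))
  · exact hK b hb b' hb' hne hdep

/-- The independent supersets of `I` inside `A` are the sets `I ∪ K` with `K` independent in
`A \ N̄(I)`. -/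
theorem sum_superset_eq_prod_mul_indepPoly (p : E → ℝ) {A I : Finset E} (hI : Indep S I)
    (hIA : I ⊆ A) :
    ∑ J ∈ A.powerset.filter (fun J => Indep S J ∧ I ⊆ J), (-1) ^ (J.card - I.card) * ∏ b ∈ J, p b
      = (∏ b ∈ I, p b) * indepPoly S p (A \ closedNbhd S I) := by
  rw [indepPoly, Finset.mul_sum]
  refine Finset.sum_nbij' (· \ I) (I ∪ ·) ?_ ?_ ?_ ?_ ?_
  · simp only [Finset.mem_filter, Finset.mem_powerset]
    rintro J ⟨hJA, hJ, hIJ⟩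
    refine ⟨fun x hx => ?_, hJ.subset Finset.sdiff_subset⟩
    obtain ⟨hxJ, hxI⟩ := Finset.mem_sdiff.1 hx
    refine Finset.mem_sdiff.2 ⟨hJA hxJ, fun hxN => ?_⟩
    obtain hxI' | ⟨j, hjI, hdep⟩ := mem_closedNbhd.1 hxN
    · exact hxI hxI'
    · exact hJ x hxJ j (hIJ hjI) (fun h => hxI (h ▸ hjI)) hdep
  · simp only [Finset.mem_filter, Finset.mem_powerset]
    rintro K ⟨hKA, hK⟩
    have hKN : ∀ x ∈ K, x ∉ closedNbhd S I := fun x hx => (Finset.mem_sdiff.1 (hKA hx)).2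
    exact ⟨Finset.union_subset hIA fun x hx => (Finset.mem_sdiff.1 (hKA hx)).1,
      hI.union hK hKN, Finset.subset_union_left⟩
  · intro J hJ
    exact Finset.union_sdiff_of_subset (Finset.mem_filter.1 hJ).2.2
  · intro K hK
    refine Finset.union_sdiff_cancel_left (Finset.disjoint_left.2 fun x hxI hxK => ?_)
    have hKA := Finset.mem_powerset.1 (Finset.mem_filter.1 hK).1
    exact (Finset.mem_sdiff.1 (hKA hxK)).2 (mem_closedNbhd.2 (Or.inl hxI))
  · intro J hJ
    have hIJ := (Finset.mem_filter.1 hJ).2.2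
    rw [Finset.card_sdiff_of_subset hIJ, ← Finset.prod_sdiff hIJ]
    ring

theorem Q_eq_prod_mul_indepPoly (p : E → ℝ) {I : Finset E} (hI : Indep S I) :
    Q S p I = (∏ b ∈ I, p b) * indepPoly S p (Finset.univ \ closedNbhd S I) := by
  rw [← sum_superset_eq_prod_mul_indepPoly p hI (Finset.subset_univ I), Q, Finset.powerset_univ]
  exact Finset.sum_congr (Finset.filter_congr fun J _ => and_comm) fun _ _ => rfl

theorem indepPoly_sdiff_eq_sum (p : E → ℝ) {A W : Finset E} (hWA : W ⊆ A) :
    indepPoly S p (A \ W) = ∑ J ∈ W.powerset.filter (Indep S),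
      (∏ b ∈ J, p b) * indepPoly S p (A \ closedNbhd S J) := by
  have hswap : ∀ J ∈ W.powerset.filter (Indep S),
      (∏ b ∈ J, p b) * indepPoly S p (A \ closedNbhd S J) =
        ∑ J' ∈ A.powerset.filter (fun J' => Indep S J' ∧ J ⊆ J'),
          (-1) ^ (J'.card - J.card) * ∏ b ∈ J', p b := fun J hJ =>
    (sum_superset_eq_prod_mul_indepPoly p (Finset.mem_filter.1 hJ).2
      ((Finset.mem_powerset.1 (Finset.mem_filter.1 hJ).1).trans hWA)).symm
  rw [Finset.sum_congr rfl hswap, Finset.sum_comm' (t' := A.powerset.filter (Indep S))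
    (s' := fun J' => (J' ∩ W).powerset)]
  · simp_rw [← Finset.sum_mul]
    rw [Finset.sum_congr rfl fun J' _ =>
      congrArg (· * _) (sum_powerset_neg_one_pow_sub_card Finset.inter_subset_left)]
    simp_rw [ite_mul, zero_mul, ← Finset.sum_filter, Finset.filter_filter, indepPoly]
    refine Finset.sum_congr (Finset.ext fun J' => ?_) fun _ _ => rfl
    simp only [Finset.mem_filter, Finset.mem_powerset, Finset.subset_sdiff,
      ← Finset.disjoint_iff_inter_eq_empty]
    tauto
  · intro J J'
    simp only [Finset.mem_filter, Finset.mem_powerset, Finset.subset_inter_iff]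
    constructor
    · rintro ⟨⟨hJW, -⟩, hJ'A, hJ', hJJ'⟩
      exact ⟨⟨hJJ', hJW⟩, hJ'A, hJ'⟩
    · rintro ⟨⟨hJJ', hJW⟩, hJ'A, hJ'⟩
      exact ⟨⟨hJW, hJ'.subset hJJ'⟩, hJ'A, hJ', hJJ'⟩

theorem indepPoly_sdiff_clique (p : E → ℝ) (A : Finset E) {V : Finset E}
    (hV : ∀ b ∈ V, ∀ b' ∈ V, b ≠ b' → Dep S b b') :
    indepPoly S p (A \ V) =
      indepPoly S p A + ∑ b ∈ V ∩ A, p b * indepPoly S p (A \ closedNbhd S {b}) := by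
  have hVA : ∀ b ∈ V ∩ A, ∀ b' ∈ V ∩ A, b ≠ b' → Dep S b b' := fun b hb b' hb' =>
    hV b (Finset.mem_inter.1 hb).1 b' (Finset.mem_inter.1 hb').1
  have hsets : (V ∩ A).powerset.filter (Indep S) = insert ∅ ((V ∩ A).image fun b => {b}) := by
    ext J
    simp only [Finset.mem_filter, Finset.mem_powerset, Finset.mem_insert, Finset.mem_image]
    constructor
    · rintro ⟨hJ, hJi⟩
      obtain h | ⟨b, hb, rfl⟩ := indep_subset_clique hVA hJ hJi
      · exact Or.inl h
      · exact Or.inr ⟨b, hb, rfl⟩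
    · rintro (rfl | ⟨b, hb, rfl⟩)
      · exact ⟨Finset.empty_subset _, indep_empty⟩
      · exact ⟨Finset.singleton_subset_iff.2 hb, indep_singleton b⟩
  rw [← Finset.sdiff_inter_self_right A V, indepPoly_sdiff_eq_sum p Finset.inter_subset_right,
    hsets, Finset.sum_insert, Finset.sum_image]
  · simp
  · exact fun _ _ _ _ h => Finset.singleton_injective h
  · simp

theorem indepPoly_sdiff_singleton (p : E → ℝ) {A : Finset E} {b : E} (hb : b ∈ A) :
    indepPoly S p (A \ {b}) = indepPoly S p A + p b * indepPoly S p (A \ closedNbhd S {b}) := by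
  rw [indepPoly_sdiff_clique p A (V := {b}) (by simp), Finset.singleton_inter_of_mem hb,
    Finset.sum_singleton]

end IndepPoly

section ShearerRegion

variable {n : ℕ} {E : Type} [Fintype E] {S : E → Finset (Fin n)} {p : E → ℝ}

theorem Shearer.indepPoly_univ_pos (hp : Shearer S p) : 0 < indepPoly S p Finset.univ := by
  simpa [Q_eq_prod_mul_indepPoly p indep_empty] using hp.1

theorem Shearer.indepPoly_univ_le (hp : Shearer S p) (A : Finset E) :
    indepPoly S p Finset.univ ≤ indepPoly S p A := by
  rw [← sdiff_sdiff_eq_self (Finset.subset_univ A), indepPoly_sdiff_eq_sum p Finset.sdiff_subset]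
  have hterm : ∀ J ∈ (Finset.univ \ A).powerset.filter (Indep S),
      0 ≤ (∏ b ∈ J, p b) * indepPoly S p (Finset.univ \ closedNbhd S J) := fun J hJ => by
    rw [← Q_eq_prod_mul_indepPoly p (Finset.mem_filter.1 hJ).2]
    exact hp.2 J (Finset.mem_filter.1 hJ).2
  simpa using Finset.single_le_sum hterm
    (Finset.mem_filter.2 ⟨Finset.empty_mem_powerset _, indep_empty⟩)

theorem Shearer.indepPoly_pos (hp : Shearer S p) (A : Finset E) : 0 < indepPoly S p A :=
  hp.indepPoly_univ_pos.trans_le (hp.indepPoly_univ_le A)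

/-- Lower the coordinates of `p` one at a time: in `Z(A) = Z(A \ {b}) - p b * Z(A \ N̄(b))` the
coordinate `p b` enters only through the factor `p b`, and `Z(A \ N̄(b)) > 0`. -/
theorem Shearer.indepPoly_univ_le_of_le (hp : Shearer S p) {q : E → ℝ} (hqp : q ≤ p)
    (A : Finset E) : indepPoly S p Finset.univ ≤ indepPoly S q A := by
  suffices key : ∀ T : Finset E, ∀ q ≤ p, (∀ b ∉ T, q b = p b) →
      ∀ A, indepPoly S p Finset.univ ≤ indepPoly S q A from
    key Finset.univ q hqp (by simp) A
  intro T
  induction T using Finset.induction_on with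
  | empty =>
    intro q _ hq A
    rw [show q = p from funext fun b => hq b (Finset.notMem_empty b)]
    exact hp.indepPoly_univ_le A
  | insert b T _ ih =>
    intro q hqp hq A
    set q' := Function.update q b (p b)
    have hq' : ∀ A, indepPoly S p Finset.univ ≤ indepPoly S q' A := by
      refine ih q' (fun c => ?_) fun c hc => ?_
      · rcases eq_or_ne c b with rfl | hcb
        · simp [q']
        · simpa [q', hcb] using hqp c
      · rcases eq_or_ne c b with rfl | hcb
        · simp [q']
        · simpa [q', hcb] using hq c (by simp [hcb, hc])
    have hqq' : ∀ A, b ∉ A → indepPoly S q A = indepPoly S q' A := fun A hbA =>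
      indepPoly_congr fun c hc => by simp [q', ne_of_mem_of_not_mem hc hbA]
    by_cases hbA : b ∈ A
    · have hq := indepPoly_sdiff_singleton (S := S) q hbA
      have hq'' := indepPoly_sdiff_singleton (S := S) q' hbA
      have hN : b ∉ A \ closedNbhd S {b} := fun h =>
        (Finset.mem_sdiff.1 h).2 (self_mem_closedNbhd b)
      rw [hqq' _ (by simp), hqq' _ hN] at hq
      have hpos := hp.indepPoly_univ_pos.trans_le (hq' (A \ closedNbhd S {b}))
      have hb : q b ≤ q' b := by simpa [q'] using hqp b
      nlinarith [hq' A]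
    · rw [hqq' A hbA]
      exact hq' A

theorem Shearer.of_le (hp : Shearer S p) {q : E → ℝ} (hq0 : 0 ≤ q) (hqp : q ≤ p) :
    Shearer S q := by
  have hZ : ∀ A, 0 < indepPoly S q A := fun A =>
    hp.indepPoly_univ_pos.trans_le (hp.indepPoly_univ_le_of_le hqp A)
  refine ⟨by simpa [Q_eq_prod_mul_indepPoly q indep_empty] using hZ _, fun I hI => ?_⟩
  rw [Q_eq_prod_mul_indepPoly q hI]
  exact mul_nonneg (Finset.prod_nonneg fun b _ => hq0 b) (hZ _).le

/-- The point `q` that agrees with `p` on the clique `V` and with `c • p` elsewhere lies below `p`,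
so `Z_q(𝓑) ≥ 0`; as `Z` is affine in the coordinates indexed by `V`, `Z_q(𝓑)` is computed from
`Z_{c • p}`. -/
theorem Shearer.one_sub_mul_sum_clique_le (hp : Shearer S p) (hp0 : 0 ≤ p) {c : ℝ} (hc : c ≤ 1)
    {V : Finset E} (hV : ∀ b ∈ V, ∀ b' ∈ V, b ≠ b' → Dep S b b') :
    (1 - c) * ∑ b ∈ V, p b * indepPoly S (c • p) (Finset.univ \ closedNbhd S {b})
      ≤ indepPoly S (c • p) Finset.univ := by
  set q : E → ℝ := fun b => if b ∈ V then p b else c * p b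
  have hqp : q ≤ p := fun b => by
    by_cases hb : b ∈ V
    · simp [q, hb]
    · simpa [q, hb] using mul_le_of_le_one_left (hp0 b) hc
  have hVN : ∀ b ∈ V, V ⊆ closedNbhd S {b} := fun b hb b' hb' => by
    rcases eq_or_ne b' b with rfl | hne
    · exact self_mem_closedNbhd b'
    · exact mem_closedNbhd.2 (Or.inr ⟨b, Finset.mem_singleton_self b, hV b' hb' b hb hne⟩)
  have hq_off : ∀ A, Disjoint A V → indepPoly S q A = indepPoly S (c • p) A := fun A hA =>
    indepPoly_congr fun b hb => by simp [q, Finset.disjoint_left.1 hA hb]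
  have hq := indepPoly_sdiff_clique q Finset.univ hV
  have hcp := indepPoly_sdiff_clique (c • p) Finset.univ hV
  rw [Finset.inter_univ] at hq hcp
  rw [hq_off _ Finset.sdiff_disjoint] at hq
  rw [Finset.sum_congr rfl fun b hb => by
    rw [hq_off _ (Finset.disjoint_of_subset_right (hVN b hb) Finset.sdiff_disjoint),
      show q b = p b from if_pos hb]] at hq
  simp only [Pi.smul_apply, smul_eq_mul, mul_assoc, ← Finset.mul_sum] at hcp
  have hZq := (hp.indepPoly_univ_pos.trans_le (hp.indepPoly_univ_le_of_le hqp Finset.univ)).le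
  linarith

end ShearerRegion

section ListWeight

variable {E : Type}

noncomputable def listWeight (p : E → ℝ) (σ : List (Finset E)) : ℝ :=
  (σ.map fun J => ∏ b ∈ J, p b).prod

theorem listWeight_nonneg {p : E → ℝ} (hp0 : 0 ≤ p) (σ : List (Finset E)) :
    0 ≤ listWeight p σ :=
  List.prod_nonneg fun _ hx => by
    obtain ⟨J, -, rfl⟩ := List.mem_map.1 hx
    exact Finset.prod_nonneg fun b _ => hp0 b

end ListWeight

section LayerSequences

variable {n : ℕ} {E : Type} [Fintype E] {S : E → Finset (Fin n)}

variable (S) in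
/-- The lists `[J₁, …, Jₖ]`, `k ≤ L`, of nonempty independent sets with `J₁ ⊆ A` and
`Jᵢ₊₁ ⊆ N̄(Jᵢ)`. -/
noncomputable def validSeqs : ℕ → Finset E → Finset (List (Finset E))
  | 0, _ => {[]}
  | L + 1, A => insert [] <| ((A.powerset.filter (Indep S)).erase ∅).biUnion fun J =>
      (validSeqs L (closedNbhd S J)).map ⟨List.cons J, List.cons_injective⟩

theorem nil_mem_validSeqs (L : ℕ) (A : Finset E) : [] ∈ validSeqs S L A := by
  cases L <;> simp [validSeqs]

theorem cons_mem_validSeqs {L : ℕ} {A J : Finset E} {σ : List (Finset E)} (hJA : J ⊆ A)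
    (hJ : J.Nonempty) (hJi : Indep S J) (hσ : σ ∈ validSeqs S L (closedNbhd S J)) :
    J :: σ ∈ validSeqs S (L + 1) A := by
  simp only [validSeqs, Finset.mem_insert, reduceCtorEq, false_or, Finset.mem_biUnion,
    Finset.mem_erase, Finset.mem_filter, Finset.mem_powerset, Finset.mem_map,
    Function.Embedding.coeFn_mk, List.cons.injEq]
  exact ⟨J, ⟨hJ.ne_empty, hJA, hJi⟩, σ, hσ, rfl, rfl⟩

theorem sum_validSeqs_succ (p : E → ℝ) (L : ℕ) (A : Finset E) :
    ∑ σ ∈ validSeqs S (L + 1) A, listWeight p σ =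
      1 + ∑ J ∈ (A.powerset.filter (Indep S)).erase ∅,
        (∏ b ∈ J, p b) * ∑ σ ∈ validSeqs S L (closedNbhd S J), listWeight p σ := by
  rw [validSeqs, Finset.sum_insert, Finset.sum_biUnion]
  · simp [listWeight, Finset.mul_sum]
  · intro J _ J' _ hne
    simp only [Function.onFun, Finset.disjoint_left, Finset.mem_map, Function.Embedding.coeFn_mk]
    rintro _ ⟨σ, -, rfl⟩ ⟨σ', -, h⟩
    exact hne (List.cons_eq_cons.1 h).1.symm
  · simp

theorem Shearer.sum_validSeqs_mul_le {p : E → ℝ} (hp : Shearer S p) (hp0 : 0 ≤ p) (L : ℕ)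
    (A : Finset E) :
    (∑ σ ∈ validSeqs S L A, listWeight p σ) * indepPoly S p Finset.univ
      ≤ indepPoly S p (Finset.univ \ A) := by
  induction L generalizing A with
  | zero => simpa [validSeqs, listWeight] using hp.indepPoly_univ_le _
  | succ L ih =>
    have hsplit := indepPoly_sdiff_eq_sum (S := S) p (Finset.subset_univ A)
    rw [← Finset.add_sum_erase _ _
      (Finset.mem_filter.2 ⟨Finset.empty_mem_powerset A, indep_empty⟩), Finset.prod_empty,
      closedNbhd_empty, Finset.sdiff_empty, one_mul] at hsplit
    rw [sum_validSeqs_succ, add_mul, one_mul, Finset.sum_mul, hsplit]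
    refine add_le_add_right (Finset.sum_le_sum fun J _ => ?_) _
    rw [mul_assoc]
    exact mul_le_mul_of_nonneg_left (ih _) (Finset.prod_nonneg fun b _ => hp0 b)

end LayerSequences

namespace WDag

section Layers

variable {n : ℕ} {E : Type} {S : E → Finset (Fin n)} (G : WDag n E S)

theorem wellFounded_swap_edge : WellFounded (Function.swap G.edge) := by
  have : Std.Irrefl (Relation.TransGen (Function.swap G.edge)) :=
    ⟨fun v hv => G.acyclic v (Relation.transGen_swap.1 hv)⟩
  exact Subrelation.wf Relation.TransGen.single (Finite.wellFounded_of_trans_of_irrefl _)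

/-- The number of nodes on a longest path from a node to a sink (so sinks have depth `1`). -/
noncomputable def depth : Fin G.size → ℕ :=
  G.wellFounded_swap_edge.fix fun v ih =>
    (Finset.univ.filter (G.edge v ·)).attach.sup
      (fun w => ih w.1 (Finset.mem_filter.1 w.2).2) + 1

theorem depth_eq (v : Fin G.size) :
    G.depth v = (Finset.univ.filter (G.edge v ·)).sup G.depth + 1 := by
  rw [depth, WellFounded.fix_eq]
  exact congrArg (· + 1) (Finset.sup_attach _ _)

theorem one_le_depth (v : Fin G.size) : 1 ≤ G.depth v := by
  rw [depth_eq]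
  omega

theorem depth_lt_of_edge {v w : Fin G.size} (h : G.edge v w) : G.depth w < G.depth v := by
  rw [G.depth_eq v, Nat.lt_succ_iff]
  exact Finset.le_sup (Finset.mem_filter.2 ⟨Finset.mem_univ w, h⟩)

theorem isSink_iff_depth_eq_one (v : Fin G.size) : G.IsSink v ↔ G.depth v = 1 := by
  refine ⟨fun hv => ?_, fun hv w hw => ?_⟩
  · rw [depth_eq, Finset.filter_false_of_mem fun w _ => hv w]
    rfl
  · have := G.depth_lt_of_edge hw
    have := G.one_le_depth w
    omega

theorem exists_edge_depth_add_one {v : Fin G.size} (hv : 2 ≤ G.depth v) :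
    ∃ w, G.edge v w ∧ G.depth w + 1 = G.depth v := by
  have hne : (Finset.univ.filter (G.edge v ·)).Nonempty := by
    rw [Finset.nonempty_iff_ne_empty]
    intro h
    rw [depth_eq, h] at hv
    simp at hv
  obtain ⟨w, hw, hsup⟩ := Finset.exists_mem_eq_sup _ hne G.depth
  exact ⟨w, (Finset.mem_filter.1 hw).2, by rw [G.depth_eq v, hsup]⟩

theorem edge_iff {v w : Fin G.size} :
    G.edge v w ↔ Dep S (G.label v) (G.label w) ∧ G.depth w < G.depth v := by
  refine ⟨fun h => ⟨G.edge_dep v w h, G.depth_lt_of_edge h⟩, fun ⟨hdep, hlt⟩ => ?_⟩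
  refine (G.dep_edge v w (by rintro rfl; omega) hdep).resolve_right fun h => ?_
  have := G.depth_lt_of_edge h
  omega

noncomputable def height : ℕ := Finset.univ.sup G.depth

theorem depth_le_height (v : Fin G.size) : G.depth v ≤ G.height :=
  Finset.le_sup (Finset.mem_univ v)

theorem exists_depth_eq {t : ℕ} (ht : 1 ≤ t) (hth : t ≤ G.height) : ∃ v, G.depth v = t := by
  have hne : (Finset.univ : Finset (Fin G.size)).Nonempty := by
    rw [Finset.nonempty_iff_ne_empty]
    intro h
    rw [height, h] at hth
    simp at hth
    omega
  obtain ⟨v, -, hv⟩ := Finset.exists_mem_eq_sup _ hne G.depth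
  have descend : ∀ d v, G.depth v = t + d → ∃ u, G.depth u = t := by
    intro d
    induction d with
    | zero => exact fun v hv => ⟨v, hv⟩
    | succ d ih =>
      intro v hv
      obtain ⟨w, -, hw⟩ := G.exists_edge_depth_add_one (v := v) (by omega)
      exact ih w (by omega)
  have hv : G.depth v = G.height := hv.symm
  exact descend (G.height - t) v (by omega)

noncomputable def layer (t : ℕ) : Finset E :=
  (Finset.univ.filter (G.depth · = t)).image G.label

theorem mem_layer {t : ℕ} {x : E} : x ∈ G.layer t ↔ ∃ v, G.depth v = t ∧ G.label v = x := by
  simp [layer]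

theorem mem_layer_bounds {t : ℕ} {x : E} (hx : x ∈ G.layer t) : 1 ≤ t ∧ t ≤ G.height := by
  obtain ⟨v, rfl, -⟩ := G.mem_layer.1 hx
  exact ⟨G.one_le_depth v, G.depth_le_height v⟩

theorem layer_nonempty {t : ℕ} (ht : 1 ≤ t) (hth : t ≤ G.height) : (G.layer t).Nonempty := by
  obtain ⟨v, hv⟩ := G.exists_depth_eq ht hth
  exact ⟨G.label v, G.mem_layer.2 ⟨v, hv, rfl⟩⟩

theorem indep_layer (t : ℕ) : Indep S (G.layer t) := by
  rintro _ hx _ hy hne hdep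
  obtain ⟨v, hv, rfl⟩ := G.mem_layer.1 hx
  obtain ⟨w, hw, rfl⟩ := G.mem_layer.1 hy
  rcases G.dep_edge v w (by rintro rfl; exact hne rfl) hdep with h | h
  · have := G.depth_lt_of_edge h
    omega
  · have := G.depth_lt_of_edge h
    omega

noncomputable def layers : List (Finset E) := (List.range' 1 G.height).map G.layer

theorem awt_eq_prod (P : E → ℝ) (ρ : ℝ) :
    G.awt P ρ = ∏ v, (1 + ρ) * P (G.label v) := by
  rw [awt, wt, Finset.prod_mul_distrib, Finset.prod_const, Finset.card_univ, Fintype.card_fin,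
    mul_comm]

theorem prod_label_eq_listWeight_layers {G : WDag n E S}
    (hinj : Function.Injective fun v => (G.depth v, G.label v)) (p : E → ℝ) :
    ∏ v, p (G.label v) = listWeight p G.layers := by
  have hmaps : ∀ v ∈ Finset.univ, G.depth v ∈ (List.range' 1 G.height).toFinset := fun v _ => by
    have := G.one_le_depth v
    have := G.depth_le_height v
    simp only [List.mem_toFinset, List.mem_range'_1]
    omega
  rw [← Finset.prod_fiberwise_of_maps_to hmaps, layers, listWeight, List.map_map,
    ← List.prod_toFinset _ List.nodup_range']
  refine Finset.prod_congr rfl fun t _ => ?_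
  rw [Function.comp_apply, layer, Finset.prod_image fun v hv w hw h => hinj (Prod.ext
    ((Finset.mem_filter.1 hv).2.trans (Finset.mem_filter.1 hw).2.symm) h)]

/-- Edges are determined by depths and labels (`edge_iff`). -/
theorem iso_of_layers_eq {G₁ G₂ : WDag n E S}
    (h₁ : Function.Injective fun v => (G₁.depth v, G₁.label v))
    (h₂ : Function.Injective fun v => (G₂.depth v, G₂.label v)) (h : G₁.layers = G₂.layers) :
    Iso G₁ G₂ := by
  have hheight : G₁.height = G₂.height := by simpa [layers] using congrArg List.length h
  have hlayer : ∀ t, 1 ≤ t → t ≤ G₁.height → G₁.layer t = G₂.layer t := by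
    rw [layers, layers, ← hheight, List.map_inj_left] at h
    exact fun t ht1 ht2 => h t (List.mem_range'_1.2 ⟨ht1, by omega⟩)
  have hrange : Set.range (fun v => (G₁.depth v, G₁.label v))
      = Set.range (fun v => (G₂.depth v, G₂.label v)) := by
    ext ⟨t, x⟩
    have key : ∀ G : WDag n E S, (t, x) ∈ Set.range (fun v => (G.depth v, G.label v))
        ↔ x ∈ G.layer t := fun G => by simp [mem_layer]
    rw [key, key]
    constructor
    · intro hx
      obtain ⟨ht1, ht2⟩ := G₁.mem_layer_bounds hx
      rwa [← hlayer t ht1 ht2]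
    · intro hx
      obtain ⟨ht1, ht2⟩ := G₂.mem_layer_bounds hx
      rwa [hlayer t ht1 (hheight ▸ ht2)]
  let e := (Equiv.ofInjective _ h₁).trans
    ((Equiv.setCongr hrange).trans (Equiv.ofInjective _ h₂).symm)
  have he : ∀ v, G₂.depth (e v) = G₁.depth v ∧ G₂.label (e v) = G₁.label v := fun v =>
    Prod.mk.inj (Equiv.apply_ofInjective_symm h₂ _)
  refine ⟨e, fun v => (he v).2, fun v w => ?_⟩
  rw [edge_iff, edge_iff, (he v).1, (he w).1, (he v).2, (he w).2]

namespace SinkLabeled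

variable {G : WDag n E S} {b : E}

theorem layer_one (hsl : G.SinkLabeled b) : G.layer 1 = {b} := by
  obtain ⟨v₀, hv₀, rfl, huniq⟩ := hsl
  ext x
  simp only [mem_layer, Finset.mem_singleton, ← isSink_iff_depth_eq_one]
  exact ⟨fun ⟨v, hv, hx⟩ => hx ▸ huniq v hv ▸ rfl, fun hx => ⟨v₀, hv₀, hx.symm⟩⟩

theorem one_le_height (hsl : G.SinkLabeled b) : 1 ≤ G.height := by
  obtain ⟨v₀, -⟩ := hsl
  exact (G.one_le_depth v₀).trans (G.depth_le_height v₀)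

theorem layers_eq (hsl : G.SinkLabeled b) :
    G.layers = {b} :: (List.range' 2 (G.height - 1)).map G.layer := by
  obtain ⟨k, hk⟩ : ∃ k, G.height = k + 1 := ⟨G.height - 1, by have := hsl.one_le_height; omega⟩
  simp [layers, hk, List.range'_succ, hsl.layer_one]

theorem dep_label_self (hsl : G.SinkLabeled b) (hbb : Dep S b b) (v : Fin G.size) :
    Dep S (G.label v) (G.label v) := by
  by_cases hv : G.IsSink v
  · obtain ⟨v₀, -, rfl, huniq⟩ := hsl
    rwa [huniq v hv]
  · obtain ⟨w, hw⟩ : ∃ w, G.edge v w := by simpa [IsSink] using hv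
    obtain ⟨x, hx⟩ := G.edge_dep v w hw
    exact ⟨x, Finset.mem_inter.2 ⟨(Finset.mem_inter.1 hx).1, (Finset.mem_inter.1 hx).1⟩⟩

theorem injective_depth_label (hsl : G.SinkLabeled b) (hbb : Dep S b b) :
    Function.Injective fun v => (G.depth v, G.label v) := by
  intro v w h
  obtain ⟨hd, hl⟩ := Prod.mk.inj h
  by_contra hne
  have hdep : Dep S (G.label v) (G.label w) := hl ▸ hsl.dep_label_self hbb v
  rcases G.dep_edge v w hne hdep with h' | h'
  · have := G.depth_lt_of_edge h'
    omega
  · have := G.depth_lt_of_edge h'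
    omega

end SinkLabeled

end Layers

section ValidLayers

variable {n : ℕ} {E : Type} [Fintype E] {S : E → Finset (Fin n)} (G : WDag n E S)

theorem layer_succ_subset {t : ℕ} (ht : 1 ≤ t) :
    G.layer (t + 1) ⊆ closedNbhd S (G.layer t) := by
  intro x hx
  obtain ⟨v, hv, rfl⟩ := G.mem_layer.1 hx
  obtain ⟨w, hvw, hw⟩ := G.exists_edge_depth_add_one (v := v) (by omega)
  exact mem_closedNbhd.2
    (Or.inr ⟨G.label w, G.mem_layer.2 ⟨w, by omega, rfl⟩, G.edge_dep v w hvw⟩)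

theorem range'_map_layer_mem_validSeqs :
    ∀ d t L (A : Finset E), 1 ≤ t → t + d = G.height + 1 → d ≤ L → G.layer t ⊆ A →
      (List.range' t d).map G.layer ∈ validSeqs S L A := by
  intro d
  induction d with
  | zero => exact fun _ L A _ _ _ _ => nil_mem_validSeqs L A
  | succ d ih =>
    intro t L A ht htd hdL htA
    obtain ⟨L, rfl⟩ : ∃ L', L = L' + 1 := ⟨L - 1, by omega⟩
    rw [List.range'_succ, List.map_cons]
    exact cons_mem_validSeqs htA (G.layer_nonempty ht (by omega)) (G.indep_layer t)
      (ih (t + 1) L _ (by omega) (by omega) (by omega) (G.layer_succ_subset ht))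

theorem SinkLabeled.tail_layers_mem_validSeqs {b : E} {G : WDag n E S} (hsl : G.SinkLabeled b)
    {L : ℕ} (hL : G.height ≤ L + 1) : G.layers.tail ∈ validSeqs S L (closedNbhd S {b}) := by
  have := hsl.one_le_height
  rw [hsl.layers_eq, List.tail_cons]
  exact G.range'_map_layer_mem_validSeqs _ 2 L _ (by norm_num) (by omega) (by omega)
    (hsl.layer_one ▸ G.layer_succ_subset le_rfl)

end ValidLayers

end WDag

section MainBound

variable {n : ℕ} {E : Type} [Fintype E] {S : E → Finset (Fin n)}

variable (S) in
/-- `Γ(b)`: the isomorphism classes of single-sink witness DAGs with sink labeled `b`. -/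
abbrev SinkClass (b : E) : Type :=
  {c : WDag.WClass n E S //
    ∃ G : WDag n E S, Quotient.mk (WDag.wdSetoid n E S) G = c ∧ WDag.SinkLabeled G b}

/-- A class in `Γ(b)` is encoded by the layers of a representative below the sink; the codes
are distinct elements of `validSeqs`, whose total weight is controlled by `Z`. -/
theorem tsum_sinkClass_le {P : E → ℝ} (hP0 : 0 ≤ P) {ρ : ℝ} (hρ : 0 ≤ 1 + ρ)
    (hp : Shearer S fun b => (1 + ρ) * P b) {b : E} (hbb : Dep S b b) :
    ∑' τ : SinkClass S b, ENNReal.ofReal (WDag.cawt P ρ τ.1) ≤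
      ENNReal.ofReal ((1 + ρ) * P b *
        indepPoly S (fun b => (1 + ρ) * P b) (Finset.univ \ closedNbhd S {b}) /
          indepPoly S (fun b => (1 + ρ) * P b) Finset.univ) := by
  set p : E → ℝ := fun b => (1 + ρ) * P b
  have hp0 : 0 ≤ p := fun b => mul_nonneg hρ (hP0 b)
  choose G hG hsl using fun τ : SinkClass S b => τ.2
  have hinj := fun τ => (hsl τ).injective_depth_label hbb
  have hweight : ∀ τ, WDag.cawt P ρ τ.1 = p b * listWeight p (G τ).layers.tail := by
    intro τ
    rw [← hG τ]
    change WDag.awt P ρ (G τ) = _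
    rw [WDag.awt_eq_prod]
    change ∏ v, p ((G τ).label v) = _
    rw [WDag.prod_label_eq_listWeight_layers (hinj τ), (hsl τ).layers_eq]
    simp [listWeight, p]
  have hcode : ∀ τ₁ τ₂, (G τ₁).layers.tail = (G τ₂).layers.tail → τ₁ = τ₂ := by
    intro τ₁ τ₂ h
    refine Subtype.ext ?_
    rw [← hG τ₁, ← hG τ₂]
    refine Quotient.sound (WDag.iso_of_layers_eq (hinj τ₁) (hinj τ₂) ?_)
    rw [(hsl τ₁).layers_eq, (hsl τ₂).layers_eq] at h ⊢
    rw [List.tail_cons, List.tail_cons] at h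
    rw [h]
  refine ENNReal.summable.tsum_le_of_sum_le fun F => ?_
  set L := F.sup fun τ => (G τ).height
  have hZ := hp.indepPoly_univ_pos
  rw [← ENNReal.ofReal_sum_of_nonneg fun τ _ => (hweight τ).symm ▸
    mul_nonneg (hp0 b) (listWeight_nonneg hp0 _)]
  refine ENNReal.ofReal_le_ofReal ((le_div_iff₀ hZ).2 ?_)
  have hsub : F.image (fun τ => (G τ).layers.tail) ⊆ validSeqs S L (closedNbhd S {b}) := by
    intro σ hσ
    obtain ⟨τ, hτ, rfl⟩ := Finset.mem_image.1 hσ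
    exact (hsl τ).tail_layers_mem_validSeqs
      (by have := Finset.le_sup (f := fun τ => (G τ).height) hτ; omega)
  calc (∑ τ ∈ F, WDag.cawt P ρ τ.1) * indepPoly S p Finset.univ
      = p b * ((∑ σ ∈ F.image fun τ => (G τ).layers.tail, listWeight p σ)
          * indepPoly S p Finset.univ) := by
        rw [Finset.sum_image fun τ₁ _ τ₂ _ => hcode τ₁ τ₂, Finset.sum_congr rfl fun τ _ =>
          hweight τ, ← Finset.mul_sum, mul_assoc]
    _ ≤ p b * ((∑ σ ∈ validSeqs S L (closedNbhd S {b}), listWeight p σ)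
          * indepPoly S p Finset.univ) := by
        gcongr
        · exact hp0 b
        · exact fun σ _ _ => listWeight_nonneg hp0 σ
    _ ≤ p b * indepPoly S p (Finset.univ \ closedNbhd S {b}) :=
        mul_le_mul_of_nonneg_left (hp.sum_validSeqs_mul_le hp0 L _) (hp0 b)

theorem sum_clique_le_of_slack {P : E → ℝ} (hP0 : 0 ≤ P) {ε ρ : ℝ}
    (hslack : Shearer S fun b => (1 + ε) * P b) (hρ0 : 0 ≤ ρ) (hρε : ρ < ε) {V : Finset E}
    (hV : ∀ b ∈ V, ∀ b' ∈ V, b ≠ b' → Dep S b b') :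
    ∑ b ∈ V, (1 + ρ) * P b *
        indepPoly S (fun b => (1 + ρ) * P b) (Finset.univ \ closedNbhd S {b})
      ≤ (1 + ρ) / (ε - ρ) * indepPoly S (fun b => (1 + ρ) * P b) Finset.univ := by
  have hε : 0 < 1 + ε := by linarith
  set c := (1 + ρ) / (1 + ε)
  have hcp : c • (fun b => (1 + ε) * P b) = fun b => (1 + ρ) * P b := by
    funext b
    simp only [Pi.smul_apply, smul_eq_mul, c]
    field_simp
  have h := hslack.one_sub_mul_sum_clique_le (fun b => mul_nonneg hε.le (hP0 b)) (c := c)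
    ((div_le_one hε).2 (by linarith)) hV
  rw [hcp] at h
  calc _ = (1 + ρ) / (ε - ρ) * ((1 - c) * ∑ b ∈ V, (1 + ε) * P b *
          indepPoly S (fun b => (1 + ρ) * P b) (Finset.univ \ closedNbhd S {b})) := by
        rw [Finset.mul_sum, Finset.mul_sum]
        refine Finset.sum_congr rfl fun b _ => ?_
        have : ε - ρ ≠ 0 := by linarith
        simp only [c]
        field_simp
        ring
    _ ≤ (1 + ρ) / (ε - ρ) * indepPoly S (fun b => (1 + ρ) * P b) Finset.univ :=
        mul_le_mul_of_nonneg_left h (div_nonneg (by linarith) (by linarith))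

end MainBound

theorem stmt1_general {n : ℕ} {E : Type} [Fintype E] (S : E → Finset (Fin n)) (P : E → ℝ)
    (hP0 : ∀ b, 0 ≤ P b) (ε ρ : ℝ)
    (hslack : Shearer S (fun b => (1 + ε) * P b))
    (hρ0 : 0 ≤ ρ) (hρε : ρ < ε)
    (V : Finset E) (hV : ∀ b ∈ V, ∀ b' ∈ V, Dep S b b') :
    ∑ b ∈ V, ∑' τ : {c : WDag.WClass n E S //
        ∃ G : WDag n E S, Quotient.mk (WDag.wdSetoid n E S) G = c ∧ WDag.SinkLabeled G b},
        ENNReal.ofReal (WDag.cawt P ρ τ.1)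
      ≤ ENNReal.ofReal ((1 + ρ) / (ε - ρ)) := by
  have hρ : 0 ≤ 1 + ρ := by linarith
  set p : E → ℝ := fun b => (1 + ρ) * P b
  have hp : Shearer S p := hslack.of_le (fun b => mul_nonneg hρ (hP0 b))
    fun b => mul_le_mul_of_nonneg_right (by linarith) (hP0 b)
  have hZ := hp.indepPoly_univ_pos
  calc _ ≤ ∑ b ∈ V, ENNReal.ofReal
        (p b * indepPoly S p (Finset.univ \ closedNbhd S {b}) / indepPoly S p Finset.univ) :=
        Finset.sum_le_sum fun b hb => tsum_sinkClass_le hP0 hρ hp (hV b hb b hb)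
    _ = ENNReal.ofReal ((∑ b ∈ V, p b * indepPoly S p (Finset.univ \ closedNbhd S {b})) /
          indepPoly S p Finset.univ) := by
        rw [Finset.sum_div, ENNReal.ofReal_sum_of_nonneg fun b _ =>
          div_nonneg (mul_nonneg (mul_nonneg hρ (hP0 b)) (hp.indepPoly_pos _).le) hZ.le]
    _ ≤ ENNReal.ofReal ((1 + ρ) / (ε - ρ)) := ENNReal.ofReal_le_ofReal <| (div_le_iff₀ hZ).2 <|
        sum_clique_le_of_slack hP0 hslack hρ0 hρε fun b hb b' hb' _ => hV b hb b' hb'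

/-- If the Shearer criterion holds with ε-slack and V is a
dependency-clique, then for 0 ≤ ρ < ε, the sum over B ∈ V of the adjusted
weights a_ρ(τ) over all single-sink witness DAGs τ with sink labeled B is at
most (1+ρ)/(ε-ρ). -/
theorem stmt1 {n : ℕ} {E : Type} [Fintype E] (S : E → Finset (Fin n)) (P : E → ℝ)
    (hP0 : ∀ b, 0 ≤ P b) (hP1 : ∀ b, P b ≤ 1) (ε ρ : ℝ)
    (hslack : Shearer S (fun b => (1 + ε) * P b))
    (hρ0 : 0 ≤ ρ) (hρε : ρ < ε)
    (V : Finset E) (hV : ∀ b ∈ V, ∀ b' ∈ V, Dep S b b') :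
    ∑ b ∈ V, ∑' τ : {c : WDag.WClass n E S //
        ∃ G : WDag n E S, Quotient.mk (WDag.wdSetoid n E S) G = c ∧ WDag.SinkLabeled G b},
        ENNReal.ofReal (WDag.cawt P ρ τ.1)
      ≤ ENNReal.ofReal ((1 + ρ) / (ε - ρ)) :=
  stmt1_general S P hP0 ε ρ hslack hρ0 hρε V hV

end LLL
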